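/- arXiv:math/0601090 — 5 statements merged into one kernel-verified Lean document; each statement's English description precedes it below -/
import Mathlib

section
/- Let H be a Hilbert space, S a bounded positive self-adjoint operator on H with spectrum contained in [A,B] where 0 < A ≤ B < ∞, and let g ∈ H be nonzero. Set γ = φ(S)g with φ continuous and positive on [A,B], and let Q ∈ (0,1] be such that the spectrum of Sφ²(S) lies in [QB', B'] for some B' > 0 (i.e., Q is the ratio of min to max of sφ²(s) over the spectrum of S). Then ‖γ/‖γ‖ − S^{-1/2}g/‖S^{-1/2}g‖‖ ≤ (1 − Q^{1/4})·√(2/(1+Q)). -/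
/-!
Write `x = φ(S) g`, `y = S^{-1/2} g` and `q = Q^{1/4}`. On `σ(S)` the ratio `φ(s) / s^{-1/2} = √s φ(s)`
lies in `[m, M] = [q² √B', √B']`, so the operator `(φ(S) - m S^{-1/2}) (M S^{-1/2} - φ(S))` is positive.
This gives `‖x‖² + m M ‖y‖² ≤ (m + M) Re⟪x, y⟫`, and AM-GM turns it into the Kantorovich
(Greub-Rheinboldt) bound `2 √(m M) ‖x‖ ‖y‖ ≤ (m + M) Re⟪x, y⟫`, i.e. `Re⟪x, y⟫ ≥ 2q / (1 + q²) ‖x‖ ‖y‖`.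
For the normalized vectors `‖u - v‖² = 2 - 2 Re⟪u, v⟫ ≤ 2 (1 - q)² / (1 + q²) ≤ 2 (1 - q)² / (1 + Q)`.
-/

open scoped InnerProductSpace
open RCLike

theorem mul_rpow_neg_half_le_iff {c s u : ℝ} (hc : 0 ≤ c) (hs : 0 < s) (hu : 0 ≤ u) :
    c * s ^ (-(1 / 2) : ℝ) ≤ u ↔ c ^ 2 ≤ s * u ^ 2 := by
  rw [Real.rpow_neg hs.le, ← Real.sqrt_eq_rpow, ← div_eq_mul_inv, div_le_iff₀ (by positivity),
    ← pow_le_pow_iff_left₀ hc (by positivity) two_ne_zero, mul_pow, Real.sq_sqrt hs.le, mul_comm]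

theorem le_mul_rpow_neg_half_iff {c s u : ℝ} (hc : 0 ≤ c) (hs : 0 < s) (hu : 0 ≤ u) :
    u ≤ c * s ^ (-(1 / 2) : ℝ) ↔ s * u ^ 2 ≤ c ^ 2 := by
  rw [Real.rpow_neg hs.le, ← Real.sqrt_eq_rpow, ← div_eq_mul_inv, le_div_iff₀ (by positivity),
    ← pow_le_pow_iff_left₀ (by positivity) hc two_ne_zero, mul_pow, Real.sq_sqrt hs.le, mul_comm]

section InnerProduct

variable {E : Type*} [NormedAddCommGroup E] [InnerProductSpace ℂ E]

theorem two_sqrt_mul_mul_norm_mul_norm_le_re_inner {x y : E} {m M : ℝ} (hm : 0 ≤ m) (hM : 0 ≤ M)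
    (h : 0 ≤ re ⟪x - m • y, M • y - x⟫_ℂ) :
    2 * √(m * M) * (‖x‖ * ‖y‖) ≤ (m + M) * re ⟪x, y⟫_ℂ := by
  have hexpand : re ⟪x - m • y, M • y - x⟫_ℂ
      = (m + M) * re ⟪x, y⟫_ℂ - ‖x‖ ^ 2 - m * M * ‖y‖ ^ 2 := by
    simp only [inner_sub_left, inner_sub_right, real_smul_eq_coe_smul (K := ℂ), inner_smul_left,
      inner_smul_right, map_sub, re_ofReal_mul, conj_ofReal, inner_self_eq_norm_sq]
    rw [inner_re_symm y x]
    ring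
  have hsq : √(m * M) ^ 2 = m * M := Real.sq_sqrt (mul_nonneg hm hM)
  nlinarith [sq_nonneg (‖x‖ - √(m * M) * ‖y‖)]

theorem norm_inv_smul_sub_inv_smul_sq {x y : E} (hx : x ≠ 0) (hy : y ≠ 0) :
    ‖‖x‖⁻¹ • x - ‖y‖⁻¹ • y‖ ^ 2 = 2 - 2 * (re ⟪x, y⟫_ℂ / (‖x‖ * ‖y‖)) := by
  have hx' : ‖x‖ ≠ 0 := norm_ne_zero_iff.mpr hx
  have hy' : ‖y‖ ≠ 0 := norm_ne_zero_iff.mpr hy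
  rw [@norm_sub_sq ℂ, norm_smul, norm_smul, norm_inv, norm_inv, norm_norm, norm_norm,
    real_smul_eq_coe_smul (K := ℂ), real_smul_eq_coe_smul (K := ℂ) ‖y‖⁻¹, inner_smul_left,
    inner_smul_right, conj_ofReal, ← mul_assoc, ← ofReal_mul, re_ofReal_mul]
  field_simp
  ring

end InnerProduct

section FunctionalCalculus

variable {H : Type*} [NormedAddCommGroup H] [InnerProductSpace ℂ H] [CompleteSpace H]

theorem re_inner_cfc_apply_nonneg {a : H →L[ℂ] H} {u v : ℝ → ℝ}
    (hu : ContinuousOn u (spectrum ℝ a)) (hv : ContinuousOn v (spectrum ℝ a))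
    (huv : ∀ s ∈ spectrum ℝ a, 0 ≤ u s * v s) (g : H) :
    0 ≤ re ⟪cfc u a g, cfc v a g⟫_ℂ := by
  have hpos : 0 ≤ cfc u a * cfc v a := cfc_mul u v a ▸ cfc_nonneg huv
  have := ((ContinuousLinearMap.nonneg_iff_isPositive _).mp hpos).re_inner_nonneg_left g
  rwa [mul_apply_eq_comp, ← (cfc_predicate u a : IsSelfAdjoint (cfc u a)).adjoint_eq,
    ContinuousLinearMap.adjoint_inner_left, inner_re_symm] at this

theorem two_sqrt_mul_mul_norm_cfc_mul_norm_cfc_le {a : H →L[ℂ] H} {f h : ℝ → ℝ} {m M : ℝ}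
    (hf : ContinuousOn f (spectrum ℝ a)) (hh : ContinuousOn h (spectrum ℝ a))
    (hm : 0 ≤ m) (hM : 0 ≤ M) (hlow : ∀ s ∈ spectrum ℝ a, m * h s ≤ f s)
    (hup : ∀ s ∈ spectrum ℝ a, f s ≤ M * h s) (g : H) :
    2 * √(m * M) * (‖cfc f a g‖ * ‖cfc h a g‖) ≤ (m + M) * re ⟪cfc f a g, cfc h a g⟫_ℂ := by
  refine two_sqrt_mul_mul_norm_mul_norm_le_re_inner hm hM ?_
  have := re_inner_cfc_apply_nonneg (u := fun s => f s - m * h s) (v := fun s => M * h s - f s)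
    (hf.sub (continuousOn_const.mul hh)) ((continuousOn_const.mul hh).sub hf)
    (fun s hs => mul_nonneg (sub_nonneg.2 (hlow s hs)) (sub_nonneg.2 (hup s hs))) g
  rwa [cfc_sub f (fun s => m * h s) a, cfc_sub (fun s => M * h s) f a, cfc_const_mul m h a,
    cfc_const_mul M h a, sub_apply, sub_apply, smul_apply, smul_apply] at this

theorem two_sqrt_mul_mul_norm_cfc_mul_norm_cfc_rpow_neg_half_le {a : H →L[ℂ] H} {φ : ℝ → ℝ}
    {m M : ℝ} (ha : ∀ s ∈ spectrum ℝ a, 0 < s) (hφ : ContinuousOn φ (spectrum ℝ a))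
    (hφ0 : ∀ s ∈ spectrum ℝ a, 0 ≤ φ s) (hm : 0 ≤ m) (hM : 0 ≤ M)
    (hlow : ∀ s ∈ spectrum ℝ a, m ^ 2 ≤ s * φ s ^ 2)
    (hup : ∀ s ∈ spectrum ℝ a, s * φ s ^ 2 ≤ M ^ 2) (g : H) :
    2 * √(m * M) * (‖cfc φ a g‖ * ‖cfc (fun s : ℝ => s ^ (-(1 / 2) : ℝ)) a g‖) ≤
      (m + M) * re ⟪cfc φ a g, cfc (fun s : ℝ => s ^ (-(1 / 2) : ℝ)) a g⟫_ℂ :=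
  two_sqrt_mul_mul_norm_cfc_mul_norm_cfc_le hφ
    (continuousOn_id.rpow_const fun s hs => Or.inl (ha s hs).ne') hm hM
    (fun s hs => (mul_rpow_neg_half_le_iff hm (ha s hs) (hφ0 s hs)).2 (hlow s hs))
    (fun s hs => (le_mul_rpow_neg_half_iff hM (ha s hs) (hφ0 s hs)).2 (hup s hs)) g

theorem cfc_apply_ne_zero {a : H →L[ℂ] H} (ha : IsSelfAdjoint a) {f : ℝ → ℝ}
    (hf : ContinuousOn f (spectrum ℝ a)) (hf0 : ∀ s ∈ spectrum ℝ a, f s ≠ 0) {g : H}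
    (hg : g ≠ 0) : cfc f a g ≠ 0 :=
  fun h0 => hg <| (ContinuousLinearMap.isUnit_iff_bijective.mp
    ((isUnit_cfc_iff f a hf ha).mpr hf0)).injective (h0.trans (map_zero _).symm)

end FunctionalCalculus

theorem stmt0_general {H : Type*} [NormedAddCommGroup H] [InnerProductSpace ℂ H] [CompleteSpace H]
    (S : H →L[ℂ] H) (hS : IsSelfAdjoint S) (A B : ℝ) (hA : 0 < A)
    (hspec : spectrum ℝ S ⊆ Set.Icc A B)
    (g : H) (hg : g ≠ 0)
    (φ : ℝ → ℝ) (hφc : ContinuousOn φ (Set.Icc A B))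
    (hφpos : ∀ s ∈ Set.Icc A B, 0 < φ s)
    (Q B' : ℝ) (hQ : Q ∈ Set.Ioc (0:ℝ) 1) (hB' : 0 < B')
    (hQspec : ∀ s ∈ spectrum ℝ S, Q * B' ≤ s * (φ s)^2 ∧ s * (φ s)^2 ≤ B') :
    ‖‖(cfc φ S) g‖⁻¹ • (cfc φ S) g -
      ‖(cfc (fun s : ℝ => s ^ (-(1/2) : ℝ)) S) g‖⁻¹ •
        (cfc (fun s : ℝ => s ^ (-(1/2) : ℝ)) S) g‖ ≤
      (1 - Q ^ ((1:ℝ)/4)) * Real.sqrt (2 / (1 + Q)) := by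
  obtain ⟨hQ0, hQ1⟩ := hQ
  set q : ℝ := Q ^ ((1 : ℝ) / 4)
  set x := cfc φ S g
  set y := cfc (fun s : ℝ => s ^ (-(1/2) : ℝ)) S g
  have hq0 : 0 < q := by positivity
  have hq1 : q ≤ 1 := Real.rpow_le_one hQ0.le hQ1 (by norm_num)
  have hq4 : q ^ 4 = Q := by
    rw [← Real.rpow_natCast, ← Real.rpow_mul hQ0.le]
    norm_num
  have hB'sq : √B' ^ 2 = B' := Real.sq_sqrt hB'.le
  have hspos : ∀ s ∈ spectrum ℝ S, 0 < s := fun s hs => hA.trans_le (hspec hs).1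
  have hφ : ContinuousOn φ (spectrum ℝ S) := hφc.mono hspec
  have hkant := two_sqrt_mul_mul_norm_cfc_mul_norm_cfc_rpow_neg_half_le (m := q ^ 2 * √B')
    hspos hφ (fun s hs => (hφpos s (hspec hs)).le) (by positivity) (Real.sqrt_nonneg B')
    (fun s hs => by rw [mul_pow, ← pow_mul, hq4, hB'sq]; exact (hQspec s hs).1)
    (fun s hs => by rw [hB'sq]; exact (hQspec s hs).2) g
  have hx : x ≠ 0 := cfc_apply_ne_zero hS hφ (fun s hs => (hφpos s (hspec hs)).ne') hg
  have hy : y ≠ 0 := cfc_apply_ne_zero hS (continuousOn_id.rpow_const fun s hs =>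
    Or.inl (hspos s hs).ne') (fun s hs => (Real.rpow_pos_of_pos (hspos s hs) _).ne') hg
  have hcos : 2 * q / (1 + q ^ 2) ≤ re ⟪x, y⟫_ℂ / (‖x‖ * ‖y‖) := by
    rw [show q ^ 2 * √B' * √B' = (q * √B') ^ 2 by ring, Real.sqrt_sq (by positivity)] at hkant
    rw [div_le_div_iff₀ (by positivity) (by positivity)]
    nlinarith [Real.sqrt_pos.mpr hB']
  have hQq : Q ≤ q ^ 2 := hq4 ▸ pow_le_pow_of_le_one hq0.le hq1 (by norm_num)
  refine le_of_pow_le_pow_left₀ two_ne_zero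
    (mul_nonneg (sub_nonneg.2 hq1) (Real.sqrt_nonneg _)) ?_
  rw [norm_inv_smul_sub_inv_smul_sq hx hy, mul_pow, Real.sq_sqrt (by positivity)]
  calc 2 - 2 * (re ⟪x, y⟫_ℂ / (‖x‖ * ‖y‖)) ≤ 2 - 2 * (2 * q / (1 + q ^ 2)) := by linarith
    _ = (1 - q) ^ 2 * (2 / (1 + q ^ 2)) := by field_simp; ring
    _ ≤ (1 - q) ^ 2 * (2 / (1 + Q)) := by gcongr

/-- Kantorovich-type error bound for approximating the canonical tight window
`g^t = S^{-1/2} g` by `γ = φ(S) g`. -/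
theorem stmt0 {H : Type*} [NormedAddCommGroup H] [InnerProductSpace ℂ H] [CompleteSpace H]
    (S : H →L[ℂ] H) (hS : IsSelfAdjoint S) (A B : ℝ) (hA : 0 < A) (hAB : A ≤ B)
    (hspec : spectrum ℝ S ⊆ Set.Icc A B)
    (g : H) (hg : g ≠ 0)
    (φ : ℝ → ℝ) (hφc : ContinuousOn φ (Set.Icc A B))
    (hφpos : ∀ s ∈ Set.Icc A B, 0 < φ s)
    (Q B' : ℝ) (hQ : Q ∈ Set.Ioc (0:ℝ) 1) (hB' : 0 < B')
    (hQspec : ∀ s ∈ spectrum ℝ S, Q * B' ≤ s * (φ s)^2 ∧ s * (φ s)^2 ≤ B') :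
    ‖‖(cfc φ S) g‖⁻¹ • (cfc φ S) g -
      ‖(cfc (fun s : ℝ => s ^ (-(1/2) : ℝ)) S) g‖⁻¹ •
        (cfc (fun s : ℝ => s ^ (-(1/2) : ℝ)) S) g‖ ≤
      (1 - Q ^ ((1:ℝ)/4)) * Real.sqrt (2 / (1 + Q)) :=
  stmt0_general S hS A B hA hspec g hg φ hφc hφpos Q B' hQ hB' hQspec
end

section
/- Define f : ℝ → ℝ by f(s) = s·(φ₂(s))² where φ₂(s) = (3/2) − (1/2)s (the first-order Taylor approximation of s^{-1/2} at s=1). Then for every s ∈ (0, √3) with s ≠ 1, |f(s) − 1| < |s − 1|, f(1) = 1, and the iteration s_{k+1} = f(s_k) starting from any s₀ ∈ (0, √3) converges to 1, with quadratic convergence: |f(s) − 1| ≤ C·|s − 1|² for a constant C on any compact subinterval of (0, √3). -/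
/-- The scalar map of tight-window iteration II (initial scaling),
acting on the singular-value variable. -/
noncomputable def f3 (s : ℝ) : ℝ := s * ((3/2) - (1/2) * s) ^ 2

lemma f3_key (s : ℝ) : f3 s - 1 = (s - 1) ^ 2 * (s - 4) / 4 := by
  unfold f3; ring

lemma sqrt3_lt_3 : Real.sqrt 3 < 3 := by
  nlinarith [Real.sq_sqrt (by norm_num : (0:ℝ) ≤ 3), Real.sqrt_nonneg (3:ℝ)]

lemma f3_mem {s : ℝ} (h0 : 0 < s) (h3 : s < 3) : 0 < f3 s ∧ f3 s ≤ 1 := by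
  constructor
  · unfold f3
    have : (0:ℝ) < (3/2) - (1/2) * s := by linarith
    positivity
  · nlinarith [f3_key s, sq_nonneg (s - 1)]

lemma step {t x : ℝ} (h0 : 0 < t) (hx : t ≤ x) (hx1 : x ≤ 1) :
    x ≤ f3 x ∧ f3 x ≤ 1 ∧ 1 - f3 x ≤ ((1 - t) * (4 - t) / 4) * (1 - x) := by
  refine ⟨?_, ?_, ?_⟩
  · unfold f3
    nlinarith [mul_nonneg (mul_nonneg (lt_of_lt_of_le h0 hx).le
      (by linarith : (0:ℝ) ≤ 1 - x)) (by linarith : (0:ℝ) ≤ 5 - x)]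
  · nlinarith [f3_key x, sq_nonneg (x - 1)]
  · have hk := f3_key x
    nlinarith [mul_nonneg (sub_nonneg.2 hx1) (sub_nonneg.2 hx)]

lemma iter_bound {t : ℝ} (h0 : 0 < t) (h1 : t ≤ 1) (k : ℕ) :
    t ≤ f3^[k] t ∧ f3^[k] t ≤ 1 ∧
      1 - f3^[k] t ≤ ((1 - t) * (4 - t) / 4) ^ k * (1 - t) := by
  induction k with
  | zero => exact ⟨le_refl _, h1, by simp⟩
  | succ n ih =>
    obtain ⟨ih1, ih2, ih3⟩ := ih
    have hs := step h0 ih1 ih2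
    rw [Function.iterate_succ_apply']
    have hq : 0 ≤ (1 - t) * (4 - t) / 4 := by
      have := mul_nonneg (by linarith : (0:ℝ) ≤ 1 - t) (by linarith : (0:ℝ) ≤ 4 - t)
      linarith
    refine ⟨le_trans ih1 hs.1, hs.2.1, ?_⟩
    calc 1 - f3 (f3^[n] t) ≤ ((1 - t) * (4 - t) / 4) * (1 - f3^[n] t) := hs.2.2
      _ ≤ ((1 - t) * (4 - t) / 4) * (((1 - t) * (4 - t) / 4) ^ n * (1 - t)) :=
          mul_le_mul_of_nonneg_left ih3 hq
      _ = ((1 - t) * (4 - t) / 4) ^ (n + 1) * (1 - t) := by ring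

lemma tendsto_from {t : ℝ} (h0 : 0 < t) (h1 : t ≤ 1) :
    Filter.Tendsto (fun k => f3^[k] t) Filter.atTop (nhds 1) := by
  set q : ℝ := (1 - t) * (4 - t) / 4 with hq
  have hq0 : 0 ≤ q := by
    have := mul_nonneg (by linarith : (0:ℝ) ≤ 1 - t) (by linarith : (0:ℝ) ≤ 4 - t)
    rw [hq]; linarith
  have hq1 : q < 1 := by rw [hq]; nlinarith
  have hgeo : Filter.Tendsto (fun k : ℕ => 1 - q ^ k * (1 - t)) Filter.atTop (nhds 1) := by
    have := (tendsto_pow_atTop_nhds_zero_of_lt_one hq0 hq1).mul_const (1 - t)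
    have h2 := (tendsto_const_nhds (x := (1:ℝ)) (f := Filter.atTop (α := ℕ))).sub this
    simpa using h2
  refine tendsto_of_tendsto_of_tendsto_of_le_of_le hgeo tendsto_const_nhds
    (fun k => ?_) (fun k => (iter_bound h0 h1 k).2.1)
  have := (iter_bound h0 h1 k).2.2
  linarith

/-- Fixed point, contraction toward 1, convergence of iterates on `(0, √3)`,
and quadratic convergence on compact subintervals. -/
theorem stmt3 :
    f3 1 = 1 ∧
    (∀ s ∈ Set.Ioo (0 : ℝ) (Real.sqrt 3), s ≠ 1 → |f3 s - 1| < |s - 1|) ∧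
    (∀ s₀ ∈ Set.Ioo (0 : ℝ) (Real.sqrt 3),
      Filter.Tendsto (fun k => f3^[k] s₀) Filter.atTop (nhds 1)) ∧
    (∀ a b : ℝ, 0 < a → a ≤ b → b < Real.sqrt 3 →
      ∃ C > 0, ∀ s ∈ Set.Icc a b, |f3 s - 1| ≤ C * |s - 1| ^ 2) := by
  refine ⟨by unfold f3; norm_num, ?_, ?_, ?_⟩
  · rintro s ⟨hs0, hs3⟩ hne
    have h3 : s < 3 := lt_trans hs3 sqrt3_lt_3
    have hk := f3_key s
    have habs : |f3 s - 1| = (s - 1) ^ 2 * (4 - s) / 4 := by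
      rw [hk, abs_of_nonpos (by nlinarith [sq_nonneg (s - 1)])]; ring
    rw [habs]
    rcases lt_or_gt_of_ne hne with h | h
    · rw [abs_of_neg (by linarith)]; nlinarith
    · rw [abs_of_pos (by linarith)]; nlinarith
  · rintro s₀ ⟨hs0, hs3⟩
    have h3 : s₀ < 3 := lt_trans hs3 sqrt3_lt_3
    obtain ⟨ht0, ht1⟩ := f3_mem hs0 h3
    refine (Filter.tendsto_add_atTop_iff_nat 1).1 ?_
    simpa [Function.iterate_succ_apply] using tendsto_from ht0 ht1
  · intro a b ha hab hb3
    refine ⟨1, one_pos, fun s ⟨hsa, hsb⟩ => ?_⟩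
    have h3 : s < 3 := lt_of_le_of_lt hsb (lt_trans hb3 sqrt3_lt_3)
    have h0 : 0 < s := lt_of_lt_of_le ha hsa
    have hk := f3_key s
    have habs : |f3 s - 1| = (s - 1) ^ 2 * (4 - s) / 4 := by
      rw [hk, abs_of_nonpos (by nlinarith [sq_nonneg (s - 1)])]; ring
    rw [habs, sq_abs]
    nlinarith [sq_nonneg (s - 1)]
end

section
/- Let c, d ∈ ℝ with c ≠ 0 or d ≠ 0, let ε ∈ (0,1), and define ‖(c,d)‖ = ((1−ε)c² + εd²)^{1/2}. Consider the coupled recursion c_{k+1} = (3/2)c_k/N_k − (1/2)c_k³/M_k, d_{k+1} = (3/2)d_k/N_k − (1/2)d_k³/M_k, where N_k = ((1−ε)c_k² + εd_k²)^{1/2} and M_k = ((1−ε)c_k⁶ + εd_k⁶)^{1/2}, with c₀ = 1, d₀ = x > 0. Then the sequence (c_k, d_k) is bounded for every x > 0. -/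
/-- The Zak-domain reduction of the norm-scaled tight iteration II for a
two-valued Zak transform: `Γ_k = c_k` on a set of measure `1−ε` and `= d_k`
on a set of measure `ε`. -/
noncomputable def seq11 (ε x : ℝ) : ℕ → ℝ × ℝ
  | 0 => (1, x)
  | k + 1 =>
    let c := (seq11 ε x k).1
    let d := (seq11 ε x k).2
    let N := Real.sqrt ((1 - ε) * c ^ 2 + ε * d ^ 2)
    let M := Real.sqrt ((1 - ε) * c ^ 6 + ε * d ^ 6)
    ((3/2) * c / N - (1/2) * c ^ 3 / M, (3/2) * d / N - (1/2) * d ^ 3 / M)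

/-!
Each coordinate of `Γ_{k+1}` is `(3/2) c / N - (1/2) c³ / M`, and both quotients are bounded
independently of the previous iterate: `s c² ≤ N²` and `s (c³)² ≤ M²`, where `s` is the weight
(`1 - ε` or `ε`) of that coordinate. Hence every iterate after the first has coordinates bounded
by `2 / √s`.
-/

open Real

noncomputable def normedStep (s t c d : ℝ) : ℝ :=
  (3/2) * c / √(s * c ^ 2 + t * d ^ 2) - (1/2) * c ^ 3 / √(s * c ^ 6 + t * d ^ 6)

lemma seq11_succ (ε x : ℝ) (k : ℕ) :
    seq11 ε x (k + 1) =
      (normedStep (1 - ε) ε (seq11 ε x k).1 (seq11 ε x k).2,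
        normedStep ε (1 - ε) (seq11 ε x k).2 (seq11 ε x k).1) := by
  simp only [seq11, normedStep, add_comm (ε * _)]

lemma abs_div_sqrt_le_inv_sqrt {s c A : ℝ} (hs : 0 < s) (hA : s * c ^ 2 ≤ A) :
    |c / √A| ≤ (√s)⁻¹ := by
  have hsqrt : √s * |c| ≤ √A := by
    simpa only [sqrt_mul hs.le, sqrt_sq_eq_abs] using sqrt_le_sqrt hA
  rw [abs_div, abs_of_nonneg (sqrt_nonneg A)]
  refine div_le_of_le_mul₀ (sqrt_nonneg A) (inv_nonneg.2 (sqrt_nonneg s)) ?_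
  calc |c| = (√s)⁻¹ * (√s * |c|) := by field_simp
    _ ≤ (√s)⁻¹ * √A := by gcongr

lemma abs_normedStep_le {s t : ℝ} (hs : 0 < s) (ht : 0 ≤ t) (c d : ℝ) :
    |normedStep s t c d| ≤ 2 / √s := by
  have hN : |c / √(s * c ^ 2 + t * d ^ 2)| ≤ (√s)⁻¹ :=
    abs_div_sqrt_le_inv_sqrt hs (le_add_of_nonneg_right (by positivity))
  have hM : |c ^ 3 / √(s * c ^ 6 + t * d ^ 6)| ≤ (√s)⁻¹ :=
    abs_div_sqrt_le_inv_sqrt hs (by rw [← pow_mul]; exact le_add_of_nonneg_right (by positivity))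
  calc |normedStep s t c d|
      = |(3/2) * (c / √(s * c ^ 2 + t * d ^ 2)) - (1/2) * (c ^ 3 / √(s * c ^ 6 + t * d ^ 6))| := by
        simp only [normedStep, mul_div_assoc]
    _ ≤ (3/2) * |c / √(s * c ^ 2 + t * d ^ 2)| + (1/2) * |c ^ 3 / √(s * c ^ 6 + t * d ^ 6)| := by
        refine (abs_sub _ _).trans_eq ?_
        rw [abs_mul, abs_mul, abs_of_pos (by norm_num : (0 : ℝ) < 3/2),
          abs_of_pos (by norm_num : (0 : ℝ) < 1/2)]
    _ ≤ (3/2) * (√s)⁻¹ + (1/2) * (√s)⁻¹ := by gcongr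
    _ = 2 / √s := by ring

theorem stmt11_general (ε x : ℝ) (hε : ε ∈ Set.Ioo (0 : ℝ) 1) :
    ∃ C : ℝ, ∀ k : ℕ, |(seq11 ε x k).1| ≤ C ∧ |(seq11 ε x k).2| ≤ C := by
  obtain ⟨hε₀, hε₁⟩ := hε
  have hε₁' : 0 < 1 - ε := sub_pos.2 hε₁
  refine ⟨max (max 1 |x|) (max (2 / √(1 - ε)) (2 / √ε)), fun k => ?_⟩
  cases k with
  | zero => simp [seq11]
  | succ k =>
    rw [seq11_succ]
    exact ⟨(abs_normedStep_le hε₁' hε₀.le _ _).trans (by simp),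
      (abs_normedStep_le hε₀ hε₁'.le _ _).trans (by simp)⟩

/-- Due to the norming operations, the recursion stays bounded for every `x > 0`. -/
theorem stmt11 (ε x : ℝ) (hε : ε ∈ Set.Ioo (0 : ℝ) 1) (hx : 0 < x) :
    ∃ C : ℝ, ∀ k : ℕ, |(seq11 ε x k).1| ≤ C ∧ |(seq11 ε x k).2| ≤ C :=
  stmt11_general ε x hε
end

section
/- Let g ∈ L²(ℝ) generate a Gabor frame (g, a=1, b=1) with Zak transform Zg satisfying |Zg(t,ν)|² < 2 for almost all (t,ν). Define Γ₀ = Zg and Γ_{k+1} = 2Γ_k − |Γ_k|²·Zg pointwise. Then Γ_k(t,ν) converges to 1/conj(Zg(t,ν)) for almost all (t,ν); more precisely, writing z_k = Γ_k·conj(Zg), one has 1 − z_{k+1} = (1 − z_k)² wherever defined, so convergence holds pointwise whenever 0 < |Zg|² < 2. Conversely, if |Zg(t,ν)|² > 2 on a set of positive measure, the recursion diverges there. -/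
/-!
Every iterate is a real multiple of `G`, so `z_k = Γ_k · conj G` stays real and
`|Γ_k|² |G|² = |z_k|² = z_k²`; the recursion then reads `1 − z_{k+1} = (1 − z_k)²`, i.e.
`1 − z_k = (1 − |G|²)^(2^k)`. This tends to `0` when `|1 − |G|²| < 1` and blows up when
`|G|² > 2`.
-/

open Filter Topology ComplexConjugate

theorem tendsto_abs_one_sub_pow_two_pow_atTop {w : ℝ} (hw : 1 < |w|) :
    Tendsto (fun k : ℕ => |1 - w ^ 2 ^ k|) atTop atTop := by
  have hpow : Tendsto (fun k : ℕ => |w| ^ 2 ^ k - 1) atTop atTop :=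
    tendsto_atTop_add_const_right _ _ <|
      (tendsto_pow_atTop_atTop_of_one_lt hw).comp (tendsto_pow_atTop_atTop_of_one_lt one_lt_two)
  refine tendsto_atTop_mono (fun k => ?_) hpow
  calc |w| ^ 2 ^ k - 1 = |w ^ 2 ^ k| - |1| := by rw [abs_pow, abs_one]
    _ ≤ |w ^ 2 ^ k - 1| := abs_sub_abs_le_abs_sub _ _
    _ = |1 - w ^ 2 ^ k| := abs_sub_comm _ _

theorem norm_mul_norm_eq_abs_of_mul_conj_eq {z g : ℂ} {x : ℝ} (h : z * conj g = x) :
    ‖z‖ * ‖g‖ = |x| := by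
  simpa only [norm_mul, Complex.norm_conj, Complex.norm_real, Real.norm_eq_abs]
    using congrArg (‖·‖) h

section ZakDualIteration

variable {g : ℂ} {γ : ℕ → ℂ}

theorem dualIter_mul_conj_eq (h0 : γ 0 = g)
    (hrec : ∀ k, γ (k + 1) = 2 * γ k - (‖γ k‖ : ℂ) ^ 2 * g) (k : ℕ) :
    γ k * conj g = ((1 - (1 - ‖g‖ ^ 2) ^ 2 ^ k : ℝ) : ℂ) := by
  induction k with
  | zero => simp [h0, Complex.mul_conj']
  | succ k ih =>
    have hsq : (‖γ k‖ : ℂ) ^ 2 * (g * conj g) = ((1 - (1 - ‖g‖ ^ 2) ^ 2 ^ k : ℝ) : ℂ) ^ 2 := by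
      rw [Complex.mul_conj', ← mul_pow, ← Complex.ofReal_mul,
        norm_mul_norm_eq_abs_of_mul_conj_eq ih, ← Complex.ofReal_pow, sq_abs,
        Complex.ofReal_pow]
    calc γ (k + 1) * conj g = 2 * (γ k * conj g) - (‖γ k‖ : ℂ) ^ 2 * (g * conj g) := by
          rw [hrec]; ring
      _ = ((1 - (1 - ‖g‖ ^ 2) ^ 2 ^ (k + 1) : ℝ) : ℂ) := by
          rw [ih, hsq, pow_succ 2 k, pow_mul]; push_cast; ring

theorem one_sub_dualIter_mul_conj_succ (h0 : γ 0 = g)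
    (hrec : ∀ k, γ (k + 1) = 2 * γ k - (‖γ k‖ : ℂ) ^ 2 * g) (k : ℕ) :
    1 - γ (k + 1) * conj g = (1 - γ k * conj g) ^ 2 := by
  rw [dualIter_mul_conj_eq h0 hrec, dualIter_mul_conj_eq h0 hrec, pow_succ 2 k, pow_mul]
  push_cast
  ring

theorem tendsto_dualIter_inv_conj (h0 : γ 0 = g)
    (hrec : ∀ k, γ (k + 1) = 2 * γ k - (‖γ k‖ : ℂ) ^ 2 * g)
    (hpos : 0 < ‖g‖ ^ 2) (hlt : ‖g‖ ^ 2 < 2) :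
    Tendsto γ atTop (𝓝 (conj g)⁻¹) := by
  have hconj : conj g ≠ 0 := by
    rw [map_ne_zero, ← norm_pos_iff]
    exact pos_of_mul_pos_left (by simpa [sq] using hpos) (norm_nonneg g)
  have hγ : ∀ k, ((1 - (1 - ‖g‖ ^ 2) ^ 2 ^ k : ℝ) : ℂ) * (conj g)⁻¹ = γ k := fun k => by
    rw [← dualIter_mul_conj_eq h0 hrec, mul_inv_cancel_right₀ hconj]
  have hsmall : Tendsto (fun k : ℕ => (1 - ‖g‖ ^ 2) ^ 2 ^ k) atTop (𝓝 0) :=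
    (tendsto_pow_atTop_nhds_zero_of_abs_lt_one (abs_lt.2 ⟨by linarith, by linarith⟩)).comp
      (tendsto_pow_atTop_atTop_of_one_lt one_lt_two)
  have hz : Tendsto (fun k : ℕ => ((1 - (1 - ‖g‖ ^ 2) ^ 2 ^ k : ℝ) : ℂ)) atTop (𝓝 1) := by
    simpa using ((tendsto_const_nhds (x := (1 : ℝ))).sub hsmall).ofReal
  simpa only [hγ, one_mul] using hz.mul_const (conj g)⁻¹

theorem tendsto_norm_dualIter_atTop (h0 : γ 0 = g)
    (hrec : ∀ k, γ (k + 1) = 2 * γ k - (‖γ k‖ : ℂ) ^ 2 * g) (hgt : 2 < ‖g‖ ^ 2) :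
    Tendsto (fun k => ‖γ k‖) atTop atTop := by
  have hg : 0 < ‖g‖ := by nlinarith [norm_nonneg g]
  have hnorm : ∀ k, |1 - (1 - ‖g‖ ^ 2) ^ 2 ^ k| / ‖g‖ = ‖γ k‖ := fun k => by
    rw [div_eq_iff hg.ne', norm_mul_norm_eq_abs_of_mul_conj_eq (dualIter_mul_conj_eq h0 hrec k)]
  refine ((tendsto_abs_one_sub_pow_two_pow_atTop ?_).atTop_div_const hg).congr hnorm
  rw [abs_sub_comm, lt_abs]
  left
  linarith

end ZakDualIteration

/-- Zak-domain form of dual iteration IV at critical density: `G` plays the role of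
the Zak transform `Zg`, and `Γ_{k+1} = 2Γ_k − |Γ_k|²·G` pointwise.  Writing
`z_k = Γ_k · conj G`, one has `1 − z_{k+1} = (1 − z_k)²`; the recursion converges
pointwise to `1/conj(G)` wherever `0 < |G|² < 2`, and diverges wherever `|G|² > 2`. -/
theorem stmt12 (G : ℝ × ℝ → ℂ) (Γ : ℕ → ℝ × ℝ → ℂ)
    (h0 : Γ 0 = G)
    (hrec : ∀ k p, Γ (k + 1) p = 2 * Γ k p - (‖Γ k p‖ : ℂ) ^ 2 * G p) :
    (∀ k p, 1 - Γ (k + 1) p * starRingEnd ℂ (G p) =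
        (1 - Γ k p * starRingEnd ℂ (G p)) ^ 2) ∧
    (∀ p, 0 < ‖G p‖ ^ 2 → ‖G p‖ ^ 2 < 2 →
      Tendsto (fun k => Γ k p) atTop (nhds (starRingEnd ℂ (G p))⁻¹)) ∧
    (∀ p, 2 < ‖G p‖ ^ 2 →
      Tendsto (fun k => ‖Γ k p‖) atTop atTop) :=
  ⟨fun k p => one_sub_dualIter_mul_conj_succ (γ := (Γ · p)) (congrFun h0 p) (hrec · p) k,
    fun p => tendsto_dualIter_inv_conj (γ := (Γ · p)) (congrFun h0 p) (hrec · p),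
    fun p => tendsto_norm_dualIter_atTop (γ := (Γ · p)) (congrFun h0 p) (hrec · p)⟩
end

section
/- Let S be a positive definite Hermitian matrix with σ(S) ⊆ (0, 3), and define γ₀ = g, γ_{k+1} = (3/2)γ_k − (1/2)S_k γ_k, where S_k is defined via γ_k = ψ_k(S)g and S_k = S ψ_k(S)²; equivalently ψ₀ = 1 and ψ_{k+1}(s) = ψ_k(s)·((3/2) − (1/2) s ψ_k(s)²). Set q_k(s) = s ψ_k(s)². Then q_{k+1}(s) = q_k(s)((3/2) − q_k(s)/2)² for every s, q_k(s) → 1 for all s ∈ σ(S), and γ_k → S^{-1/2}g. -/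
/-!
On `(0, 3)` the map `q ↦ q (3/2 - q/2)²` satisfies `1 - q' = (1 - q)² (4 - q) / 4`, so after
one step the error `1 - q` lies in `[0, 1)` and is at least squared at every further step;
hence `q_k(s) = s ψ_k(s)² → 1` and `ψ_k(s) → s^{-1/2}` at every point of `σ(S)`. The spectrum
is finite, so this convergence is uniform on it, and continuity of the continuous functional
calculus in the function gives `ψ_k(S) → S^{-1/2}`.
-/

open Filter Set Topology

noncomputable def tightWindowStep (x : ℝ) : ℝ := x * (3 / 2 - x / 2) ^ 2

lemma one_sub_tightWindowStep (x : ℝ) :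
    1 - tightWindowStep x = (1 - x) ^ 2 * (4 - x) / 4 := by
  unfold tightWindowStep; ring

lemma mapsTo_tightWindowStep : MapsTo tightWindowStep (Ioo 0 3) (Ioo 0 3) := by
  rintro x ⟨hx0, hx3⟩
  have hle : 0 ≤ 1 - tightWindowStep x := by
    rw [one_sub_tightWindowStep]
    have : 0 ≤ 4 - x := by linarith
    positivity
  have hpos : 0 < tightWindowStep x := by
    have : 0 < 3 / 2 - x / 2 := by linarith
    unfold tightWindowStep; positivity
  exact ⟨hpos, by linarith⟩

lemma tendsto_zero_of_le_sq {e : ℕ → ℝ} (h0 : ∀ k, 0 ≤ e k) (h1 : e 0 < 1)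
    (hsq : ∀ k, e (k + 1) ≤ e k ^ 2) : Tendsto e atTop (𝓝 0) := by
  have hbound : ∀ k, e k ≤ e 0 ^ 2 ^ k := by
    intro k
    induction k with
    | zero => simp
    | succ k ih =>
      calc e (k + 1) ≤ e k ^ 2 := hsq k
        _ ≤ (e 0 ^ 2 ^ k) ^ 2 := pow_le_pow_left₀ (h0 k) ih 2
        _ = e 0 ^ 2 ^ (k + 1) := by rw [← pow_mul, pow_succ]
  have hpow : Tendsto (fun k => e 0 ^ 2 ^ k) atTop (𝓝 0) :=
    (tendsto_pow_atTop_nhds_zero_of_lt_one (h0 0) h1).comp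
      (tendsto_pow_atTop_atTop_of_one_lt one_lt_two)
  exact tendsto_of_tendsto_of_tendsto_of_le_of_le tendsto_const_nhds hpow h0 hbound

lemma tendsto_iterate_tightWindowStep {x : ℝ} (hx : x ∈ Ioo 0 3) :
    Tendsto (fun k => tightWindowStep^[k] x) atTop (𝓝 1) := by
  have hmem : ∀ k, tightWindowStep^[k] x ∈ Ioo 0 3 := fun k =>
    mapsTo_tightWindowStep.iterate k hx
  set e : ℕ → ℝ := fun k => 1 - tightWindowStep^[k + 1] x with he
  have he_eq : ∀ k,
      e k = (1 - tightWindowStep^[k] x) ^ 2 * (4 - tightWindowStep^[k] x) / 4 := by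
    intro k
    simp only [he, Function.iterate_succ_apply', one_sub_tightWindowStep]
  have he_nonneg : ∀ k, 0 ≤ e k := by
    intro k
    have : 0 ≤ 4 - tightWindowStep^[k] x := by linarith [(hmem k).2]
    rw [he_eq]; positivity
  have he_sq : ∀ k, e (k + 1) ≤ e k ^ 2 := by
    intro k
    rw [he_eq (k + 1)]
    have : 0 < tightWindowStep^[k + 1] x := (hmem (k + 1)).1
    have : 0 ≤ (1 - tightWindowStep^[k + 1] x) ^ 2 := sq_nonneg _
    simp only [he]
    nlinarith
  have he_lt : e 0 < 1 := by
    have := (hmem 1).1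
    simp only [he]; linarith
  have hlim := (tendsto_zero_of_le_sq he_nonneg he_lt he_sq).const_sub 1
  rw [sub_zero] at hlim
  refine (tendsto_add_atTop_iff_nat 1).1 ?_
  simpa only [he, sub_sub_cancel] using hlim

lemma Set.Finite.tendstoUniformlyOn_of_tendsto {α β ι : Type*} [UniformSpace β]
    {F : ι → α → β} {f : α → β} {p : Filter ι} {s : Set α} (hs : s.Finite)
    (h : ∀ x ∈ s, Tendsto (F · x) p (𝓝 (f x))) : TendstoUniformlyOn F f p s :=
  fun _u hu => (eventually_all_finite hs).2 fun x hx => Uniform.tendsto_nhds_right.1 (h x hx) hu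

lemma ContinuousLinearMap.finite_spectrum_real {E : Type*} [NormedAddCommGroup E]
    [NormedSpace ℂ E] [FiniteDimensional ℂ E] (T : E →L[ℂ] E) : (spectrum ℝ T).Finite := by
  rw [← spectrum.preimage_algebraMap ℂ, ContinuousLinearMap.spectrum_eq]
  exact (Module.End.finite_spectrum _).preimage (FaithfulSMul.algebraMap_injective ℝ ℂ).injOn

section Iteration

variable {ψ : ℕ → ℝ → ℝ}

lemma mul_sq_succ_eq_tightWindowStep
    (hψ : ∀ k s, ψ (k + 1) s = ψ k s * ((3/2) - (1/2) * s * (ψ k s) ^ 2)) (k : ℕ) (s : ℝ) :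
    s * ψ (k + 1) s ^ 2 = tightWindowStep (s * ψ k s ^ 2) := by
  rw [hψ, tightWindowStep]; ring

lemma mul_sq_eq_iterate_tightWindowStep (hψ0 : ∀ s, ψ 0 s = 1)
    (hψ : ∀ k s, ψ (k + 1) s = ψ k s * ((3/2) - (1/2) * s * (ψ k s) ^ 2)) (k : ℕ) (s : ℝ) :
    s * ψ k s ^ 2 = tightWindowStep^[k] s := by
  induction k with
  | zero => simp [hψ0]
  | succ k ih => rw [mul_sq_succ_eq_tightWindowStep hψ, ih, Function.iterate_succ_apply']

lemma continuous_of_tightWindow_recursion (hψ0 : ∀ s, ψ 0 s = 1)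
    (hψ : ∀ k s, ψ (k + 1) s = ψ k s * ((3/2) - (1/2) * s * (ψ k s) ^ 2)) (k : ℕ) :
    Continuous (ψ k) := by
  induction k with
  | zero => rw [funext hψ0]; exact continuous_const
  | succ k ih => rw [funext (hψ k)]; fun_prop

lemma pos_of_tightWindow_recursion (hψ0 : ∀ s, ψ 0 s = 1)
    (hψ : ∀ k s, ψ (k + 1) s = ψ k s * ((3/2) - (1/2) * s * (ψ k s) ^ 2))
    {s : ℝ} (hs : s ∈ Ioo 0 3) (k : ℕ) : 0 < ψ k s := by
  induction k with
  | zero => simp [hψ0]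
  | succ k ih =>
    have hq : s * ψ k s ^ 2 < 3 := by
      rw [mul_sq_eq_iterate_tightWindowStep hψ0 hψ]
      exact (mapsTo_tightWindowStep.iterate k hs).2
    rw [hψ]
    have : 0 < 3 / 2 - 1 / 2 * s * ψ k s ^ 2 := by linarith
    positivity

lemma tendsto_rpow_neg_half_of_tightWindow_recursion (hψ0 : ∀ s, ψ 0 s = 1)
    (hψ : ∀ k s, ψ (k + 1) s = ψ k s * ((3/2) - (1/2) * s * (ψ k s) ^ 2))
    {s : ℝ} (hs : s ∈ Ioo 0 3) :
    Tendsto (fun k => ψ k s) atTop (𝓝 (s ^ (-(1/2) : ℝ))) := by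
  have hsq : Tendsto (fun k => ψ k s ^ 2) atTop (𝓝 (1 / s)) := by
    have := (tendsto_iterate_tightWindowStep hs).div_const s
    refine this.congr fun k => ?_
    rw [← mul_sq_eq_iterate_tightWindowStep hψ0 hψ]
    field_simp [hs.1.ne']
  have hsqrt := (Real.continuous_sqrt.tendsto _).comp hsq
  have hlim : Real.sqrt (1 / s) = s ^ (-(1/2) : ℝ) := by
    rw [one_div, Real.sqrt_inv, Real.sqrt_eq_rpow, Real.rpow_neg hs.1.le]
  rw [← hlim]
  refine hsqrt.congr fun k => ?_
  exact Real.sqrt_sq (pos_of_tightWindow_recursion hψ0 hψ hs k).le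

end Iteration

theorem stmt19_general {n : ℕ}
    (S : EuclideanSpace ℂ (Fin n) →L[ℂ] EuclideanSpace ℂ (Fin n))
    (hspec : spectrum ℝ S ⊆ Set.Ioo (0 : ℝ) 3)
    (g : EuclideanSpace ℂ (Fin n))
    (ψ : ℕ → ℝ → ℝ) (hψ0 : ∀ s, ψ 0 s = 1)
    (hψ : ∀ k s, ψ (k + 1) s = ψ k s * ((3/2) - (1/2) * s * (ψ k s) ^ 2))
    (q : ℕ → ℝ → ℝ) (hq : ∀ k s, q k s = s * (ψ k s) ^ 2) :
    (∀ k s, q (k + 1) s = q k s * ((3/2) - q k s / 2) ^ 2) ∧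
    (∀ s ∈ spectrum ℝ S, Tendsto (fun k => q k s) atTop (nhds 1)) ∧
    Tendsto (fun k => (cfc (ψ k) S) g) atTop
      (nhds ((cfc (fun s : ℝ => s ^ (-(1/2) : ℝ)) S) g)) := by
  refine ⟨fun k s => by rw [hq, hq, mul_sq_succ_eq_tightWindowStep hψ, tightWindowStep], ?_, ?_⟩
  · intro s hs
    simpa only [hq, mul_sq_eq_iterate_tightWindowStep hψ0 hψ]
      using tendsto_iterate_tightWindowStep (hspec hs)
  · have hunif : TendstoUniformlyOn ψ (fun s : ℝ => s ^ (-(1/2) : ℝ)) atTop (spectrum ℝ S) :=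
      S.finite_spectrum_real.tendstoUniformlyOn_of_tendsto fun s hs =>
        tendsto_rpow_neg_half_of_tightWindow_recursion hψ0 hψ (hspec hs)
    have hcfc := tendsto_cfc_fun hunif (Eventually.of_forall fun k =>
      (continuous_of_tightWindow_recursion hψ0 hψ k).continuousOn)
    exact ((ContinuousLinearMap.apply ℂ _ g).continuous.tendsto _).comp hcfc

/-- Tight-window algorithm II with initial scaling on a positive definite Hermitian
matrix with `σ(S) ⊆ (0,3)`: with `γ_k = ψ_k(S)g`, `ψ₀ = 1`,
`ψ_{k+1}(s) = ψ_k(s)((3/2) − (1/2)s·ψ_k(s)²)` and `q_k(s) = s·ψ_k(s)²`, one has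
`q_{k+1}(s) = q_k(s)((3/2) − q_k(s)/2)²`, `q_k(s) → 1` on `σ(S)`, and
`γ_k → S^{-1/2}g`. -/
theorem stmt19 {n : ℕ}
    (S : EuclideanSpace ℂ (Fin n) →L[ℂ] EuclideanSpace ℂ (Fin n))
    (hS : IsSelfAdjoint S)
    (hpos : ∀ x : EuclideanSpace ℂ (Fin n), x ≠ 0 → 0 < (inner ℂ (S x) x : ℂ).re)
    (hspec : spectrum ℝ S ⊆ Set.Ioo (0 : ℝ) 3)
    (g : EuclideanSpace ℂ (Fin n))
    (ψ : ℕ → ℝ → ℝ) (hψ0 : ∀ s, ψ 0 s = 1)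
    (hψ : ∀ k s, ψ (k + 1) s = ψ k s * ((3/2) - (1/2) * s * (ψ k s) ^ 2))
    (q : ℕ → ℝ → ℝ) (hq : ∀ k s, q k s = s * (ψ k s) ^ 2) :
    (∀ k s, q (k + 1) s = q k s * ((3/2) - q k s / 2) ^ 2) ∧
    (∀ s ∈ spectrum ℝ S, Tendsto (fun k => q k s) atTop (nhds 1)) ∧
    Tendsto (fun k => (cfc (ψ k) S) g) atTop
      (nhds ((cfc (fun s : ℝ => s ^ (-(1/2) : ℝ)) S) g)) :=
  stmt19_general S hspec g ψ hψ0 hψ q hq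
end
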